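/- arXiv:math/0112094 — 6 statements merged into one kernel-verified Lean document; each statement's English description precedes it below -/
import Mathlib

section
/- Let the resident equilibrium equations (E1) B_U·P_E·(P_SU + P_IU) = (B_A·(P_SA + P_IA) + μ_U + (1 − ρ_U)·G)·P_SU and (E2) (1 − ρ_U)·G·P_SU = (B_A·(P_SA + P_IA) + α_U·μ_U)·P_IU hold, with P_SU > 0 and P_IU > 0. Then the determinant of the invasion Jacobian J equals (ρ_U − ρ')·G·(α_U − 1)·μ_U·P_SU/(P_SU + P_IU). -/
open Matrix

theorem stmt_0 (B_U B_A μ_U α_U Γ_AU Γ_UU ρ_U ρ' P_E P_SA P_IA P_SU P_IU G : ℝ)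
    (hG : G = Γ_AU * P_IA + Γ_UU * P_IU)
    (J : Matrix (Fin 2) (Fin 2) ℝ)
    (hJ : J = !![B_U * P_E - B_A * (P_SA + P_IA) - μ_U - (1 - ρ') * G, B_U * P_E;
                 (1 - ρ') * G, -(B_A * (P_SA + P_IA)) - α_U * μ_U])
    (hE1 : B_U * P_E * (P_SU + P_IU)
        = (B_A * (P_SA + P_IA) + μ_U + (1 - ρ_U) * G) * P_SU)
    (hE2 : (1 - ρ_U) * G * P_SU = (B_A * (P_SA + P_IA) + α_U * μ_U) * P_IU)
    (hSU : 0 < P_SU) (hIU : 0 < P_IU) :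
    J.det = (ρ_U - ρ') * G * (α_U - 1) * μ_U * P_SU / (P_SU + P_IU) := by
  have hS : P_SU + P_IU ≠ 0 := by positivity
  subst hJ
  rw [Matrix.det_fin_two_of, eq_div_iff hS]
  linear_combination (-(B_A * (P_SA + P_IA) + α_U * μ_U + (1 - ρ') * G)) * hE1 +
    (-(B_A * (P_SA + P_IA) + μ_U + (1 - ρ') * G)) * hE2
end

section
/- Let the resident equilibrium equation (E1) B_U·P_E·(P_SU + P_IU) = (B_A·(P_SA + P_IA) + μ_U + (1 − ρ_U)·G)·P_SU hold, with P_SU > 0. Then the trace of the invasion Jacobian J equals (ρ' − ρ_U)·G − B_U·P_E·P_IU/P_SU − B_A·(P_SA + P_IA) − α_U·μ_U. In particular, if in addition ρ' ≤ ρ_U and B_U, B_A, μ_U, α_U, G, P_E, P_SA, P_IA, P_IU are all nonnegative, then trace(J) ≤ 0. -/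
open Matrix

theorem stmt_1 (B_U B_A μ_U α_U Γ_AU Γ_UU ρ_U ρ' P_E P_SA P_IA P_SU P_IU G : ℝ)
    (hG : G = Γ_AU * P_IA + Γ_UU * P_IU)
    (J : Matrix (Fin 2) (Fin 2) ℝ)
    (hJ : J = !![B_U * P_E - B_A * (P_SA + P_IA) - μ_U - (1 - ρ') * G, B_U * P_E;
                 (1 - ρ') * G, -(B_A * (P_SA + P_IA)) - α_U * μ_U])
    (hE1 : B_U * P_E * (P_SU + P_IU)
        = (B_A * (P_SA + P_IA) + μ_U + (1 - ρ_U) * G) * P_SU)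
    (hSU : 0 < P_SU) :
    J.trace = (ρ' - ρ_U) * G - B_U * P_E * P_IU / P_SU
        - B_A * (P_SA + P_IA) - α_U * μ_U ∧
    (ρ' ≤ ρ_U → 0 ≤ B_U → 0 ≤ B_A → 0 ≤ μ_U → 0 ≤ α_U → 0 ≤ G →
      0 ≤ P_E → 0 ≤ P_SA → 0 ≤ P_IA → 0 ≤ P_IU → J.trace ≤ 0) := by
  have htr : J.trace = (ρ' - ρ_U) * G - B_U * P_E * P_IU / P_SU
      - B_A * (P_SA + P_IA) - α_U * μ_U := by
    subst hJ
    rw [Matrix.trace_fin_two]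
    simp only [Matrix.of_apply, Matrix.cons_val_zero, Matrix.cons_val_one, Matrix.head_cons]
    field_simp
    nlinarith [hE1]
  refine ⟨htr, fun h1 h2 h3 h4 h5 h6 h7 h8 h9 h10 => ?_⟩
  rw [htr]
  have : 0 ≤ B_U * P_E * P_IU / P_SU := by positivity
  nlinarith [mul_nonneg (mul_nonneg h3 (add_nonneg h8 h9)) h5, mul_nonneg h5 h4]
end

section
/- Assume the resident equilibrium equations (E1) B_U·P_E·(P_SU + P_IU) = (B_A·(P_SA + P_IA) + μ_U + (1 − ρ_U)·G)·P_SU and (E2) (1 − ρ_U)·G·P_SU = (B_A·(P_SA + P_IA) + α_U·μ_U)·P_IU hold, with P_SU > 0, P_IU > 0, G > 0, μ_U > 0 and α_U > 1. If the invader is more resistant than the resident, i.e. ρ' > ρ_U, then det(J) < 0 and consequently J has a real eigenvalue that is strictly positive (so the more resistant phenotype invades successfully). -/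
open Matrix

theorem stmt_2 (B_U B_A μ_U α_U Γ_AU Γ_UU ρ_U ρ' P_E P_SA P_IA P_SU P_IU G : ℝ)
    (hG : G = Γ_AU * P_IA + Γ_UU * P_IU)
    (J : Matrix (Fin 2) (Fin 2) ℝ)
    (hJ : J = !![B_U * P_E - B_A * (P_SA + P_IA) - μ_U - (1 - ρ') * G, B_U * P_E;
                 (1 - ρ') * G, -(B_A * (P_SA + P_IA)) - α_U * μ_U])
    (hE1 : B_U * P_E * (P_SU + P_IU)
        = (B_A * (P_SA + P_IA) + μ_U + (1 - ρ_U) * G) * P_SU)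
    (hE2 : (1 - ρ_U) * G * P_SU = (B_A * (P_SA + P_IA) + α_U * μ_U) * P_IU)
    (hSU : 0 < P_SU) (hIU : 0 < P_IU) (hGpos : 0 < G)
    (hμ : 0 < μ_U) (hα : 1 < α_U)
    (hρ : ρ_U < ρ') :
    J.det < 0 ∧ ∃ t : ℝ, 0 < t ∧ J.charpoly.IsRoot t := by
  set a := B_A * (P_SA + P_IA) with ha
  set b := B_U * P_E with hb
  set c' := (1 - ρ') * G with hc'
  set c := (1 - ρ_U) * G with hc
  set d := a + α_U * μ_U with hd
  -- d - b > 0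
  have hdb : (d - b) * (P_SU + P_IU) = μ_U * (α_U - 1) * P_SU := by
    linear_combination -hE1 - hE2
  have hSI : 0 < P_SU + P_IU := by linarith
  have hdbpos : 0 < d - b := by
    have h1 : 0 < α_U - 1 := by linarith
    have h2 : 0 < μ_U * (α_U - 1) * P_SU := by positivity
    nlinarith
  -- determinant
  have hdet : J.det = (b - a - μ_U - c') * (-d) - b * c' := by
    rw [hJ]; rw [Matrix.det_fin_two_of]; ring
  have hkey : J.det * P_SU = (c' - c) * (d - b) * P_SU := by
    rw [hdet]
    linear_combination (-d) * hE1 - b * hE2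
  have hcc : c' - c < 0 := by
    have : (c' - c) = (ρ_U - ρ') * G := by rw [hc, hc']; ring
    nlinarith
  have hdetneg : J.det < 0 := by
    nlinarith [mul_pos (mul_pos (neg_pos.mpr hcc) hdbpos) hSU]
  refine ⟨hdetneg, ?_⟩
  have heval : ∀ t : ℝ, J.charpoly.eval t
      = (t - J 0 0) * (t - J 1 1) - J 0 1 * J 1 0 := by
    intro t
    rw [Matrix.charpoly, Matrix.det_fin_two,
      charmatrix_apply_eq, charmatrix_apply_eq,
      charmatrix_apply_ne _ _ _ (by decide),
      charmatrix_apply_ne _ _ _ (by decide)]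
    simp
  have hdet2 : J.det = J 0 0 * J 1 1 - J 0 1 * J 1 0 := Matrix.det_fin_two J
  set s := Real.sqrt ((J 0 0 + J 1 1) ^ 2 - 4 * J.det) with hs
  have hDnn : 0 ≤ (J 0 0 + J 1 1) ^ 2 - 4 * J.det := by
    nlinarith [sq_nonneg (J 0 0 + J 1 1)]
  have hsq : s ^ 2 = (J 0 0 + J 1 1) ^ 2 - 4 * J.det := Real.sq_sqrt hDnn
  have hsgt : |J 0 0 + J 1 1| < s := by
    have h1 : (J 0 0 + J 1 1) ^ 2 < (J 0 0 + J 1 1) ^ 2 - 4 * J.det := by linarith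
    have := Real.sqrt_lt_sqrt (sq_nonneg (J 0 0 + J 1 1)) h1
    rwa [Real.sqrt_sq_eq_abs] at this
  refine ⟨(J 0 0 + J 1 1 + s) / 2, ?_, ?_⟩
  · have : -(J 0 0 + J 1 1) ≤ |J 0 0 + J 1 1| := neg_le_abs _
    linarith
  · show J.charpoly.eval _ = 0
    rw [heval]
    linear_combination (1/4 : ℝ) * hsq - hdet2
end

section
/- Assume the resident equilibrium equations (E1) B_U·P_E·(P_SU + P_IU) = (B_A·(PbSA + P_IA) + μ_U + (1 − ρ_U)·G)·P_SU and (E2) (1 − ρ_U)·G·P_SU = (B_A·(P_SA + P_IA) + α_U·μ_U)·P_IU hold, where B_U, B_A, Γ_AU, Γ_UU, P_E, P_SA, P_IA are nonnegative, P_SU > 0, P_IU > 0, G > 0, μ_U > 0 and α_U > 1. If the invader is less resistant than the resident, i.e. ρ' < ρ_U, then det(J) > 0 and trace(J) < 0, and consequently every complex root of the characteristic polynomial of J has strictly negative real part (so the less resistant phenotype cannot invade). -/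
open Matrix

private lemma charpoly_fin_two' (a b c d : ℝ) :
    (!![a,b;c,d] : Matrix (Fin 2) (Fin 2) ℝ).charpoly
      = Polynomial.X ^ 2 - Polynomial.C (a + d) * Polynomial.X + Polynomial.C (a * d - b * c) := by
  rw [Matrix.charpoly, Matrix.det_fin_two]
  simp [Matrix.charmatrix_apply]
  ring

private lemma quad_root_neg_re (T D : ℝ) (hT : T < 0) (hD : 0 < D) (z : ℂ)
    (hz : z ^ 2 - (T : ℂ) * z + (D : ℂ) = 0) : z.re < 0 := by
  have hre : z.re ^ 2 - z.im ^ 2 - T * z.re + D = 0 := by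
    have := congrArg Complex.re hz
    simpa [Complex.add_re, Complex.sub_re, Complex.mul_re, pow_two] using this
  have him : z.re * z.im + z.im * z.re - T * z.im = 0 := by
    have := congrArg Complex.im hz
    simpa [Complex.add_im, Complex.sub_im, Complex.mul_im, pow_two] using this
  by_contra h
  push_neg at h
  rcases eq_or_ne z.im 0 with hy | hy
  · rw [hy] at hre
    nlinarith [sq_nonneg z.re, mul_nonneg (neg_nonneg.mpr hT.le) h]
  · have h2 : 2 * z.re - T = 0 := by
      have hprod : (2 * z.re - T) * z.im = 0 := by ring_nf; linarith [him]
      rcases mul_eq_zero.mp hprod with h' | h'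
      · exact h'
      · exact absurd h' hy
    linarith

theorem stmt_3 (B_U B_A μ_U α_U Γ_AU Γ_UU ρ_U ρ' P_E P_SA P_IA P_SU P_IU G : ℝ)
    (hG : G = Γ_AU * P_IA + Γ_UU * P_IU)
    (J : Matrix (Fin 2) (Fin 2) ℝ)
    (hJ : J = !![B_U * P_E - B_A * (P_SA + P_IA) - μ_U - (1 - ρ') * G, B_U * P_E;
                 (1 - ρ') * G, -(B_A * (P_SA + P_IA)) - α_U * μ_U])
    (hE1 : B_U * P_E * (P_SU + P_IU)
        = (B_A * (P_SA + P_IA) + μ_U + (1 - ρ_U) * G) * P_SU)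
    (hE2 : (1 - ρ_U) * G * P_SU = (B_A * (P_SA + P_IA) + α_U * μ_U) * P_IU)
    (hBU : 0 ≤ B_U) (hBA : 0 ≤ B_A) (hΓAU : 0 ≤ Γ_AU) (hΓUU : 0 ≤ Γ_UU)
    (hPE : 0 ≤ P_E) (hPSA : 0 ≤ P_SA) (hPIA : 0 ≤ P_IA)
    (hSU : 0 < P_SU) (hIU : 0 < P_IU) (hGpos : 0 < G)
    (hμ : 0 < μ_U) (hα : 1 < α_U)
    (hρ : ρ' < ρ_U) :
    0 < J.det ∧ J.trace < 0 ∧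
      ∀ z : ℂ, Polynomial.aeval z J.charpoly = 0 → z.re < 0 := by
  have hA : (0:ℝ) ≤ B_A * (P_SA + P_IA) := by positivity
  have hE : (0:ℝ) ≤ B_U * P_E := by positivity
  have hdet : J.det = (B_U * P_E - B_A * (P_SA + P_IA) - μ_U - (1 - ρ') * G) *
      (-(B_A * (P_SA + P_IA)) - α_U * μ_U) - B_U * P_E * ((1 - ρ') * G) := by
    rw [hJ]; simp [Matrix.det_fin_two_of]
  have htr : J.trace = (B_U * P_E - B_A * (P_SA + P_IA) - μ_U - (1 - ρ') * G) +
      (-(B_A * (P_SA + P_IA)) - α_U * μ_U) := by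
    rw [hJ]; simp [Matrix.trace_fin_two_of]
  have key : J.det * (P_SU + P_IU) = P_SU * ((ρ_U - ρ') * G) * ((α_U - 1) * μ_U) := by
    rw [hdet]
    linear_combination
      (-(B_A * (P_SA + P_IA) + α_U * μ_U + (1 - ρ') * G)) * hE1 +
      (-(B_A * (P_SA + P_IA) + μ_U + (1 - ρ') * G)) * hE2
  have hdetpos : 0 < J.det := by
    have h1 : 0 < P_SU * ((ρ_U - ρ') * G) * ((α_U - 1) * μ_U) := by
      have hρ' : 0 < ρ_U - ρ' := by linarith
      have hα' : 0 < α_U - 1 := by linarith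
      positivity
    have h2 : 0 < P_SU + P_IU := by linarith
    have h3 : 0 < J.det * (P_SU + P_IU) := key ▸ h1
    rcases mul_pos_iff.mp h3 with ⟨h4, _⟩ | ⟨_, h5⟩
    · exact h4
    · linarith
  -- g := (1 - ρ_U) * G is positive
  have hApos : 0 < B_A * (P_SA + P_IA) + α_U * μ_U := by nlinarith
  have hg : 0 < (1 - ρ_U) * G := by
    have h1 : 0 < (1 - ρ_U) * G * P_SU := hE2 ▸ mul_pos hApos hIU
    rcases mul_pos_iff.mp h1 with ⟨h4, _⟩ | ⟨_, h5⟩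
    · exact h4
    · linarith
  have hElt : B_U * P_E < B_A * (P_SA + P_IA) + μ_U + (1 - ρ_U) * G := by
    have hK : 0 < B_A * (P_SA + P_IA) + μ_U + (1 - ρ_U) * G := by linarith
    have h2 : 0 < P_SU + P_IU := by linarith
    have h1 : B_U * P_E * (P_SU + P_IU)
        < (B_A * (P_SA + P_IA) + μ_U + (1 - ρ_U) * G) * (P_SU + P_IU) := by
      rw [hE1]
      have := mul_pos hK hIU
      nlinarith
    exact lt_of_mul_lt_mul_right h1 h2.le
  have hgg' : (1 - ρ_U) * G < (1 - ρ') * G := by nlinarith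
  have htrneg : J.trace < 0 := by
    rw [htr]
    have := mul_pos (by linarith : (0:ℝ) < α_U) hμ
    linarith
  refine ⟨hdetpos, htrneg, ?_⟩
  intro z hz
  have hcp : J.charpoly = Polynomial.X ^ 2 - Polynomial.C J.trace * Polynomial.X +
      Polynomial.C J.det := by
    rw [htr, hdet, hJ, charpoly_fin_two']
  rw [hcp] at hz
  have hz' : z ^ 2 - (J.trace : ℂ) * z + (J.det : ℂ) = 0 := by
    simpa using hz
  exact quad_root_neg_re J.trace J.det htrneg hdetpos z hz'
end

section
/- Let a > 0 and let p, q be points of the Euclidean plane with dist(p, q) = r, where 0 ≤ r ≤ 2a. Then the Lebesgue measure (area) of the union of the two closed disks of radius a centered at p and q equals 2π·a² − 2a²·arccos(r/(2a)) + r·√(a² − r²/4). -/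
open Real MeasureTheory Metric Set

/-!
By inclusion–exclusion the union has area `2πa²` minus the area of the lens `closedBall p a ∩
closedBall q a`. A reflection composed with a translation moves the centres to `(0, 0)` and
`(r, 0)`; slicing the lens by vertical lines, its chord at abscissa `x` has length
`2 √(min (a² - x²) (a² - (x - r)²))`. This is symmetric about `x = r / 2` and equals
`2 √(a² - x²)` to the right of it, so the lens is twice the circular segment
`∫_{r/2}^a 2 √(a² - x²) dx = a² arccos (r / 2a) - (r / 2) √(a² - r² / 4)`.
-/

theorem hasDerivAt_mul_sqrt_sq_sub_sq_sub_arccos {a x : ℝ} (ha : 0 < a) (hx : |x| < a) :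
    HasDerivAt (fun y => y * √(a ^ 2 - y ^ 2) - a ^ 2 * arccos (y / a))
      (2 * √(a ^ 2 - x ^ 2)) x := by
  obtain ⟨hxl, hxr⟩ := abs_lt.1 hx
  have hpos : 0 < a ^ 2 - x ^ 2 := by nlinarith
  have hsqrt :
      HasDerivAt (fun y => √(a ^ 2 - y ^ 2)) (-(2 * x) / (2 * √(a ^ 2 - x ^ 2))) x := by
    simpa using ((hasDerivAt_pow 2 x).const_sub (a ^ 2)).sqrt hpos.ne'
  have harccos :
      HasDerivAt (fun y => arccos (y / a)) (-(1 / √(1 - (x / a) ^ 2)) * (1 / a)) x := by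
    have hlt : x / a < 1 := (div_lt_one ha).2 hxr
    have hgt : -1 < x / a := by rwa [lt_div_iff₀ ha, neg_one_mul]
    simpa [Function.comp_def] using
      (hasDerivAt_arccos hgt.ne' hlt.ne).comp x ((hasDerivAt_id x).div_const a)
  have hscale : √(1 - (x / a) ^ 2) = √(a ^ 2 - x ^ 2) / a := by
    rw [show 1 - (x / a) ^ 2 = (a ^ 2 - x ^ 2) / a ^ 2 by field_simp, sqrt_div hpos.le,
      sqrt_sq ha.le]
  refine (((hasDerivAt_id' x).mul hsqrt).sub (harccos.const_mul (a ^ 2))).congr_deriv ?_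
  rw [hscale]
  field_simp
  linear_combination -sq_sqrt hpos.le

theorem integral_two_mul_sqrt_sq_sub_sq {a d : ℝ} (ha : 0 < a) (hd : -a ≤ d) (hda : d ≤ a) :
    ∫ x in d..a, 2 * √(a ^ 2 - x ^ 2) = a ^ 2 * arccos (d / a) - d * √(a ^ 2 - d ^ 2) := by
  rw [intervalIntegral.integral_eq_sub_of_hasDerivAt_of_le hda (by fun_prop)
    (fun x hx =>
      hasDerivAt_mul_sqrt_sq_sub_sq_sub_arccos ha (abs_lt.2 ⟨by linarith [hx.1], hx.2⟩))
    ((by fun_prop : Continuous fun x => 2 * √(a ^ 2 - x ^ 2)).intervalIntegrable _ _)]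
  simp [div_self ha.ne']

theorem volume_setOf_sq_le (c : ℝ) :
    volume {y : ℝ | y ^ 2 ≤ c} = ENNReal.ofReal (2 * √c) := by
  rcases le_or_gt 0 c with hc | hc
  · rw [show {y : ℝ | y ^ 2 ≤ c} = Icc (-√c) √c by ext y; exact sq_le hc, volume_Icc]
    ring_nf
  · rw [sqrt_eq_zero'.2 hc.le, mul_zero, ENNReal.ofReal_zero, measure_eq_zero_iff_ae_notMem]
    exact ae_of_all _ fun y hy => (sq_nonneg y).not_gt (hy.trans_lt hc)

/-- As `√` of a negative number is `0`, this vanishes off the shadow `(r - a, a)` of the lens. -/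
noncomputable def lensChord (a r x : ℝ) : ℝ :=
  2 * √(min (a ^ 2 - x ^ 2) (a ^ 2 - (x - r) ^ 2))

theorem continuous_lensChord (a r : ℝ) : Continuous (lensChord a r) := by
  unfold lensChord
  fun_prop

theorem lensChord_nonneg (a r x : ℝ) : 0 ≤ lensChord a r x := by
  unfold lensChord
  positivity

theorem lensChord_sub_left (a r x : ℝ) : lensChord a r (r - x) = lensChord a r x := by
  rw [lensChord, lensChord, min_comm]
  ring_nf

theorem lensChord_of_half_le {a r x : ℝ} (hr : 0 ≤ r) (hx : r / 2 ≤ x) :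
    lensChord a r x = 2 * √(a ^ 2 - x ^ 2) := by
  rw [lensChord, min_eq_left (by nlinarith)]

theorem support_lensChord_subset {a : ℝ} (ha : 0 ≤ a) (r : ℝ) :
    Function.support (lensChord a r) ⊆ Ioo (r - a) a := by
  intro x hx
  have hpos : 0 < min (a ^ 2 - x ^ 2) (a ^ 2 - (x - r) ^ 2) := by
    by_contra! h
    exact hx (by rw [lensChord, sqrt_eq_zero'.2 h, mul_zero])
  obtain ⟨h₁, h₂⟩ := lt_min_iff.1 hpos
  obtain ⟨-, hxa⟩ := abs_lt_of_sq_lt_sq' (sub_pos.1 h₁) ha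
  obtain ⟨hxr, -⟩ := abs_lt_of_sq_lt_sq' (sub_pos.1 h₂) ha
  exact ⟨by linarith, hxa⟩

theorem integral_lensChord {a r : ℝ} (ha : 0 < a) (hr0 : 0 ≤ r) (hr2 : r ≤ 2 * a) :
    ∫ x, lensChord a r x = 2 * a ^ 2 * arccos (r / (2 * a)) - r * √(a ^ 2 - r ^ 2 / 4) := by
  have hint : ∀ b c, IntervalIntegrable (lensChord a r) volume b c :=
    (continuous_lensChord a r).intervalIntegrable
  have hhalf : ∫ x in r / 2..a, lensChord a r x = ∫ x in r / 2..a, 2 * √(a ^ 2 - x ^ 2) :=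
    intervalIntegral.integral_congr fun x hx =>
      lensChord_of_half_le hr0 (uIcc_of_le (by linarith : r / 2 ≤ a) ▸ hx).1
  have hsymm : ∫ x in r - a..r / 2, lensChord a r x = ∫ x in r / 2..a, lensChord a r x := by
    calc ∫ x in r - a..r / 2, lensChord a r x
        = ∫ x in r - a..r / 2, lensChord a r (r - x) := by simp only [lensChord_sub_left]
      _ = ∫ x in r - r / 2..r - (r - a), lensChord a r x :=
        intervalIntegral.integral_comp_sub_left _ r
      _ = ∫ x in r / 2..a, lensChord a r x := by congr 1 <;> ring
  rw [← intervalIntegral.integral_eq_integral_of_support_subset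
      ((support_lensChord_subset ha.le r).trans Ioo_subset_Ioc_self),
    ← intervalIntegral.integral_add_adjacent_intervals (hint _ (r / 2)) (hint _ _), hsymm, hhalf,
    integral_two_mul_sqrt_sq_sub_sq ha (by linarith) (by linarith), div_div]
  ring_nf

/-- Written out by hand: `ℝ × ℝ` carries the sup metric, whose `closedBall`s are squares. -/
def planarLens (a r : ℝ) : Set (ℝ × ℝ) :=
  {z | z.1 ^ 2 + z.2 ^ 2 ≤ a ^ 2 ∧ (z.1 - r) ^ 2 + z.2 ^ 2 ≤ a ^ 2}

theorem measurableSet_planarLens (a r : ℝ) : MeasurableSet (planarLens a r) := by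
  unfold planarLens
  measurability

theorem volume_planarLens {a : ℝ} (ha : 0 ≤ a) (r : ℝ) :
    volume (planarLens a r) = ENNReal.ofReal (∫ x, lensChord a r x) := by
  have hslice : ∀ x : ℝ, Prod.mk x ⁻¹' planarLens a r
      = {y | y ^ 2 ≤ min (a ^ 2 - x ^ 2) (a ^ 2 - (x - r) ^ 2)} := by
    intro x
    ext y
    simp only [planarLens, mem_preimage, mem_ofPred_eq, le_min_iff]
    constructor <;> rintro ⟨h₁, h₂⟩ <;> constructor <;> linarith
  have hint : Integrable (lensChord a r) :=
    (continuous_lensChord a r).integrable_of_hasCompactSupport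
      (HasCompactSupport.intro isCompact_Icc fun x hx =>
        Function.notMem_support.1 fun h =>
          hx (Ioo_subset_Icc_self (support_lensChord_subset ha r h)))
  rw [Measure.volume_eq_prod, Measure.prod_apply (measurableSet_planarLens a r),
    ofReal_integral_eq_lintegral_ofReal hint (ae_of_all _ (lensChord_nonneg a r))]
  simp only [hslice, volume_setOf_sq_le, lensChord]

theorem volume_closedBall_inter_closedBall_single {a : ℝ} (ha : 0 ≤ a) (r : ℝ) :
    volume (closedBall (0 : EuclideanSpace ℝ (Fin 2)) a ∩
        closedBall (EuclideanSpace.single 0 r) a) = volume (planarLens a r) := by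
  have hcoord : MeasurePreserving (fun x : EuclideanSpace ℝ (Fin 2) => (x 0, x 1)) :=
    (volume_preserving_finTwoArrow ℝ).comp
      (EuclideanSpace.volume_preserving_symm_measurableEquiv_toLp (Fin 2))
  have hball : ∀ z x : EuclideanSpace ℝ (Fin 2),
      x ∈ closedBall z a ↔ (x 0 - z 0) ^ 2 + (x 1 - z 1) ^ 2 ≤ a ^ 2 := by
    intro z x
    rw [mem_closedBall, EuclideanSpace.dist_eq, Fin.sum_univ_two, sqrt_le_left ha]
    simp only [Real.dist_eq, sq_abs]
  have hpre : (fun x : EuclideanSpace ℝ (Fin 2) => (x 0, x 1)) ⁻¹' planarLens a r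
      = closedBall 0 a ∩ closedBall (EuclideanSpace.single 0 r) a := by
    ext x
    simp [planarLens, hball]
  rw [← hpre, hcoord.measure_preimage (measurableSet_planarLens a r).nullMeasurableSet]

theorem volume_closedBall_inter_closedBall_eq {E : Type*} [NormedAddCommGroup E]
    [InnerProductSpace ℝ E] [FiniteDimensional ℝ E] [MeasurableSpace E] [BorelSpace E]
    {p q w : E} (h : ‖w‖ = dist p q) (a : ℝ) :
    volume (closedBall p a ∩ closedBall q a) = volume (closedBall 0 a ∩ closedBall w a) := by
  set ρ := Submodule.reflection (ℝ ∙ (q - p - w))ᗮ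
  have hρ : ρ (q - p) = w := Submodule.reflection_sub (by rw [h, dist_eq_norm'])
  have hT : MeasurePreserving (fun x => ρ (x - p)) :=
    ρ.measurePreserving.comp (measurePreserving_sub_right volume p)
  have hpre : (fun x => ρ (x - p)) ⁻¹' (closedBall 0 a ∩ closedBall w a)
      = closedBall p a ∩ closedBall q a := by
    ext x
    simp only [mem_preimage, mem_inter_iff, mem_closedBall, ← hρ, dist_zero_right,
      LinearIsometryEquiv.norm_map, LinearIsometryEquiv.dist_map, dist_sub_right, ← dist_eq_norm]
  rw [← hpre, hT.measure_preimage
    (measurableSet_closedBall.inter measurableSet_closedBall).nullMeasurableSet]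

theorem volume_closedBall_inter_closedBall_fin_two (p q : EuclideanSpace ℝ (Fin 2)) {a : ℝ}
    (ha : 0 ≤ a) :
    volume (closedBall p a ∩ closedBall q a) =
      ENNReal.ofReal (∫ x, lensChord a (dist p q) x) := by
  rw [volume_closedBall_inter_closedBall_eq (w := EuclideanSpace.single 0 (dist p q)) (by simp),
    volume_closedBall_inter_closedBall_single ha, volume_planarLens ha]

theorem stmt_15 (a r : ℝ) (ha : 0 < a)
    (p q : EuclideanSpace ℝ (Fin 2))
    (hdist : dist p q = r) (hr0 : 0 ≤ r) (hr2 : r ≤ 2 * a) :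
    volume (Metric.closedBall p a ∪ Metric.closedBall q a)
      = ENNReal.ofReal
          (2 * π * a ^ 2 - 2 * a ^ 2 * Real.arccos (r / (2 * a))
            + r * Real.sqrt (a ^ 2 - r ^ 2 / 4)) := by
  have hlens := volume_closedBall_inter_closedBall_fin_two p q ha.le
  rw [hdist] at hlens
  calc volume (closedBall p a ∪ closedBall q a)
      = volume (closedBall p a) + volume (closedBall q a)
          - volume (closedBall p a ∩ closedBall q a) :=
        ENNReal.eq_sub_of_add_eq
          (measure_inter_lt_top_of_left_ne_top measure_closedBall_lt_top.ne).ne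
          (measure_union_add_inter _ measurableSet_closedBall)
    _ = ENNReal.ofReal (2 * π * a ^ 2) - ENNReal.ofReal (∫ x, lensChord a r x) := by
        rw [hlens, EuclideanSpace.volume_closedBall_fin_two,
          EuclideanSpace.volume_closedBall_fin_two, ← ENNReal.ofReal_pow ha.le,
          ← ENNReal.ofReal_mul (by positivity),
          ← ENNReal.ofReal_add (by positivity) (by positivity)]
        ring_nf
    _ = ENNReal.ofReal (2 * π * a ^ 2 - ∫ x, lensChord a r x) :=
        (ENNReal.ofReal_sub _ (integral_nonneg (lensChord_nonneg a r))).symm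
    _ = _ := by rw [integral_lensChord ha hr0 hr2]; ring_nf
end

section
/- Let h : ℝ → ℝ be nonnegative and antitone (nonincreasing) on [0, ∞), and suppose that the radially symmetric function H : ℝ² → ℝ defined by H(x) = h(‖x‖) is integrable with respect to Lebesgue measure. Define the convolution (H ⋆ H)(x) = ∫_{ℝ²} H(y)·H(x − y) dy. Then H ⋆ H is radially symmetric and radially nonincreasing: for all x₁, x₂ ∈ ℝ² with ‖x₁‖ ≤ ‖x₂‖ one has (H ⋆ H)(x₂) ≤ (H ⋆ H)(x₁). -/
/-!
Let `σ` be the reflection in the perpendicular bisector of `x₁ x₂`, so that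
`‖x₁ - σ y‖ = ‖x₂ - y‖` and `‖x₂ - σ y‖ = ‖x₁ - y‖`. As `σ` preserves volume, twice
`∫ H y * H (x₁ - y) - ∫ H y * H (x₂ - y)` is the integral of
`(H y - H (σ y)) * (H (x₁ - y) - H (x₂ - y))`. Both factors are governed by the side of the
bisector on which `y` lies, and since `‖x₁‖ ≤ ‖x₂‖` the origin is on the side of `x₁`;
hence the integrand is pointwise nonnegative.
-/

open MeasureTheory Set Submodule

theorem AntitoneOn.mul_sub_nonneg_of_sq {h k : ℝ → ℝ} (hh : AntitoneOn h (Ici 0))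
    (hk : AntitoneOn k (Ici 0)) {a b c d : ℝ} (ha : 0 ≤ a) (hb : 0 ≤ b) (hc : 0 ≤ c)
    (hd : 0 ≤ d) (hsign : 0 ≤ (a ^ 2 - b ^ 2) * (c ^ 2 - d ^ 2)) :
    0 ≤ (h a - h b) * (k c - k d) := by
  rcases lt_trichotomy a b with hab | rfl | hab
  · have hcd : c ^ 2 - d ^ 2 ≤ 0 := nonpos_of_mul_nonneg_right hsign (by nlinarith)
    have hcd : c ≤ d := (sq_le_sq₀ hc hd).1 (by linarith)
    exact mul_nonneg (sub_nonneg.2 (hh ha hb hab.le)) (sub_nonneg.2 (hk hc hd hcd))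
  · simp
  · have hcd : 0 ≤ c ^ 2 - d ^ 2 := nonneg_of_mul_nonneg_right hsign (by nlinarith)
    have hcd : d ≤ c := (sq_le_sq₀ hd hc).1 (by linarith)
    exact mul_nonneg_of_nonpos_of_nonpos (sub_nonpos.2 (hh hb ha hab.le))
      (sub_nonpos.2 (hk hd hc hcd))

theorem AntitoneOn.measurable_comp_norm {E : Type*} [NormedAddCommGroup E] [MeasurableSpace E]
    [OpensMeasurableSpace E] {k : ℝ → ℝ} (hk : AntitoneOn k (Ici 0)) :
    Measurable fun x : E => k ‖x‖ := by
  have hext : Antitone fun r => k (max r 0) := fun r s hrs =>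
    hk (le_max_right r 0) (le_max_right s 0) (max_le_max_right 0 hrs)
  simpa only [Function.comp_def, norm_nonneg, max_eq_left] using
    hext.measurable.comp (measurable_norm (α := E))

section PerpBisectorReflection

variable {E : Type*} [NormedAddCommGroup E] [InnerProductSpace ℝ E]

theorem reflection_singleton_apply_real (v w : E) :
    reflection (ℝ ∙ v) w = (2 * (inner ℝ v w / ‖v‖ ^ 2)) • v - w := by
  rw [reflection_singleton_apply, mul_smul, two_smul, two_smul]
  rfl

/-- The point reflection `y ↦ x₂ - y`, followed by the reflection in the line `ℝ ∙ (x₂ - x₁)`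
and the translation by `x₁`: altogether the reflection in the hyperplane bisecting `x₁ x₂`. -/
noncomputable def perpBisectorReflection (x₁ x₂ : E) : E ≃ᵢ E :=
  ((IsometryEquiv.subLeft x₂).trans (reflection (ℝ ∙ (x₂ - x₁))).toIsometryEquiv).trans
    (IsometryEquiv.addLeft x₁)

theorem perpBisectorReflection_apply (x₁ x₂ y : E) :
    perpBisectorReflection x₁ x₂ y = x₁ + reflection (ℝ ∙ (x₂ - x₁)) (x₂ - y) := rfl

theorem norm_sub_perpBisectorReflection_left (x₁ x₂ y : E) :
    ‖x₁ - perpBisectorReflection x₁ x₂ y‖ = ‖x₂ - y‖ := by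
  rw [perpBisectorReflection_apply, sub_add_cancel_left, norm_neg, LinearIsometryEquiv.norm_map]

theorem norm_sub_perpBisectorReflection_right (x₁ x₂ y : E) :
    ‖x₂ - perpBisectorReflection x₁ x₂ y‖ = ‖x₁ - y‖ := by
  have hv : reflection (ℝ ∙ (x₂ - x₁)) (x₂ - x₁) = x₂ - x₁ :=
    reflection_mem_subspace_eq_self (mem_span_singleton_self _)
  have : x₂ - perpBisectorReflection x₁ x₂ y = reflection (ℝ ∙ (x₂ - x₁)) (y - x₁) := by
    rw [perpBisectorReflection_apply, show y - x₁ = (x₂ - x₁) - (x₂ - y) by abel,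
      map_sub (reflection _) (x₂ - x₁), hv]
    abel
  rw [this, LinearIsometryEquiv.norm_map, norm_sub_rev]

theorem sq_norm_sub_sq_norm_perpBisectorReflection (x₁ x₂ y : E) :
    ‖x₂ - x₁‖ ^ 2 * (‖y‖ ^ 2 - ‖perpBisectorReflection x₁ x₂ y‖ ^ 2) =
      (‖x₁ - y‖ ^ 2 - ‖x₂ - y‖ ^ 2) * (‖x₂‖ ^ 2 - ‖x₁‖ ^ 2) := by
  obtain ⟨v, rfl⟩ : ∃ v, x₁ = x₂ - v := ⟨x₂ - x₁, by abel⟩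
  obtain ⟨w, rfl⟩ : ∃ w, y = x₂ - w := ⟨x₂ - y, by abel⟩
  rcases eq_or_ne v 0 with rfl | hv
  · simp
  have hv' : ‖v‖ ≠ 0 := norm_ne_zero_iff.mpr hv
  rw [perpBisectorReflection_apply, sub_sub_cancel, sub_sub_cancel,
    reflection_singleton_apply_real,
    show x₂ - v + ((2 * (inner ℝ v w / ‖v‖ ^ 2)) • v - w)
      = (x₂ - w) + (2 * (inner ℝ v w / ‖v‖ ^ 2) - 1) • v by module,
    show x₂ - v - (x₂ - w) = w - v by abel]
  simp only [norm_add_sq_real, norm_sub_sq_real, inner_smul_right, inner_sub_right, norm_smul,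
    mul_pow, Real.norm_eq_abs, sq_abs, real_inner_comm v]
  field_simp
  ring

theorem mul_nonneg_sq_norm_sub_perpBisectorReflection {x₁ x₂ : E} (hx : ‖x₁‖ ≤ ‖x₂‖) (y : E) :
    0 ≤ (‖y‖ ^ 2 - ‖perpBisectorReflection x₁ x₂ y‖ ^ 2) * (‖x₁ - y‖ ^ 2 - ‖x₂ - y‖ ^ 2) := by
  rcases eq_or_ne x₁ x₂ with rfl | hne
  · simp
  have hpos : 0 < ‖x₂ - x₁‖ ^ 2 := by
    have := norm_pos_iff.2 (sub_ne_zero.2 hne.symm)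
    positivity
  refine nonneg_of_mul_nonneg_right ?_ hpos
  rw [← mul_assoc, sq_norm_sub_sq_norm_perpBisectorReflection, mul_right_comm]
  exact mul_nonneg (mul_self_nonneg _) (by nlinarith [norm_nonneg x₁])

variable [MeasurableSpace E] [BorelSpace E] [FiniteDimensional ℝ E]

theorem measurePreserving_perpBisectorReflection (x₁ x₂ : E) :
    MeasurePreserving (perpBisectorReflection x₁ x₂) :=
  (measurePreserving_add_left volume x₁).comp
    ((LinearIsometryEquiv.measurePreserving (reflection (ℝ ∙ (x₂ - x₁)))).comp
      (Measure.measurePreserving_sub_left volume x₂))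

theorem integral_mul_norm_sub_le_of_norm_le {h k : ℝ → ℝ} (hh : AntitoneOn h (Ici 0))
    (hk : AntitoneOn k (Ici 0)) (hk_nonneg : ∀ r, 0 ≤ r → 0 ≤ k r)
    (hint : Integrable fun x : E => h ‖x‖) {x₁ x₂ : E} (hx : ‖x₁‖ ≤ ‖x₂‖) :
    ∫ y, h ‖y‖ * k ‖x₂ - y‖ ≤ ∫ y, h ‖y‖ * k ‖x₁ - y‖ := by
  have hint_mul (x : E) : Integrable fun y => h ‖y‖ * k ‖x - y‖ := by
    refine hint.mul_bdd (c := k 0)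
      (hk.measurable_comp_norm.comp (measurable_const.sub measurable_id)).aestronglyMeasurable
      (ae_of_all _ fun y => ?_)
    rw [Real.norm_eq_abs, abs_of_nonneg (hk_nonneg _ (norm_nonneg _))]
    exact hk self_mem_Ici (norm_nonneg _) (norm_nonneg _)
  set σ := perpBisectorReflection x₁ x₂
  set F : E → ℝ := fun y => h ‖y‖ * k ‖x₁ - y‖ - h ‖y‖ * k ‖x₂ - y‖
  have hF : Integrable F := (hint_mul x₁).sub (hint_mul x₂)
  have hσ := measurePreserving_perpBisectorReflection x₁ x₂
  have hFσ : Integrable fun y => F (σ y) :=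
    (hσ.integrable_comp_emb σ.toHomeomorph.measurableEmbedding).2 hF
  have hσF : ∫ y, F (σ y) = ∫ y, F y :=
    hσ.integral_comp σ.toHomeomorph.measurableEmbedding F
  have hpair (y : E) : F y + F (σ y) = (h ‖y‖ - h ‖σ y‖) * (k ‖x₁ - y‖ - k ‖x₂ - y‖) := by
    simp only [F, σ, norm_sub_perpBisectorReflection_left, norm_sub_perpBisectorReflection_right]
    ring
  have hsum : 0 ≤ ∫ y, (F y + F (σ y)) := integral_nonneg fun y => by
    rw [hpair]
    exact hh.mul_sub_nonneg_of_sq hk (norm_nonneg _) (norm_nonneg _) (norm_nonneg _)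
      (norm_nonneg _) (mul_nonneg_sq_norm_sub_perpBisectorReflection hx y)
  rw [integral_add hF hFσ, hσF, integral_sub (hint_mul x₁) (hint_mul x₂)] at hsum
  linarith

end PerpBisectorReflection

theorem stmt_19 (h : ℝ → ℝ) (hnn : ∀ r : ℝ, 0 ≤ r → 0 ≤ h r)
    (hmono : AntitoneOn h (Set.Ici 0))
    (H : EuclideanSpace ℝ (Fin 2) → ℝ) (hH : H = fun x => h ‖x‖)
    (hint : Integrable H) :
    ∀ x₁ x₂ : EuclideanSpace ℝ (Fin 2), ‖x₁‖ ≤ ‖x₂‖ →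
      (∫ y, H y * H (x₂ - y)) ≤ (∫ y, H y * H (x₁ - y)) := by
  subst hH
  exact fun x₁ x₂ hx => integral_mul_norm_sub_le_of_norm_le hmono hmono hnn hint hx
end
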